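/- Two extended Cartesian trees that give the same answer to every range top-2 query RT2Q(i,j) are equal; that is, if T and T' have the same topology and for some node v the merge orders M(v) and M'(v) differ, then there exist indices i < j such that the second-minimum answers determined by T and T' differ. -/

import Mathlib

inductive BT where
  | leaf : BT
  | node : BT → BT → BT
deriving DecidableEq

namespace BT

/-- Number of nodes. -/
def size : BT → ℕ
  | leaf => 0
  | node l r => l.size + r.size + 1

/-- Inorder list of node positions (paths from the root; `false` = left step). -/
def inList : BT → List (List Bool)
  | leaf => []
  | node l r => (l.inList).map (List.cons false) ++ [] :: (r.inList).map (List.cons true)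

/-- Preorder list of node positions. -/
def preList : BT → List (List Bool)
  | leaf => []
  | node l r => [] :: ((l.preList).map (List.cons false) ++ (r.preList).map (List.cons true))

/-- Subtree rooted at a given position, if the position is valid. -/
def subtree? : BT → List Bool → Option BT
  | t, [] => some t
  | leaf, _ :: _ => none
  | node l r, b :: p => if b then r.subtree? p else l.subtree? p

/-- Size of the left spine (maximal path following left children, top node included). -/
def Lspine : BT → ℕ
  | leaf => 0
  | node l _ => l.Lspine + 1

/-- Size of the right spine. -/
def Rspine : BT → ℕ
  | leaf => 0
  | node _ r => r.Rspine + 1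

/-- Size of the left inner spine of the root: right spine of the left child. -/
def lv : BT → ℕ
  | leaf => 0
  | node l _ => l.Rspine

/-- Size of the right inner spine of the root: left spine of the right child. -/
def rv : BT → ℕ
  | leaf => 0
  | node _ r => r.Lspine

/-- Sum of `f` over all (sub)trees rooted at nodes of the tree. -/
def sumNodes (f : BT → ℕ) : BT → ℕ
  | leaf => 0
  | node l r => f (node l r) + sumNodes f l + sumNodes f r

/-- Number of leaf nodes (nodes with no children). -/
def leaves : BT → ℕ
  | leaf => 0
  | node leaf leaf => 1
  | node l r => leaves l + leaves r

end BT

/-- Longest common prefix of two paths: the LCA of two positions in a binary tree. -/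
def lcp : List Bool → List Bool → List Bool
  | a :: p, b :: q => if a = b then a :: lcp p q else []
  | _, _ => []

/-- Index of the minimum element of a list (0 if empty). -/
def minIdx {α : Type*} [LinearOrder α] (l : List α) : ℕ :=
  match l.argmin id with
  | none => 0
  | some a => l.idxOf a

/-- Cartesian tree construction with fuel. -/
def cartesianAux {α : Type*} [LinearOrder α] : ℕ → List α → BT
  | 0, _ => .leaf
  | _ + 1, [] => .leaf
  | n + 1, l@(_ :: _) =>
      .node (cartesianAux n (l.take (minIdx l))) (cartesianAux n (l.drop (minIdx l + 1)))

/-- The Cartesian tree of a list: root at the position of the minimum,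
recursively built on the prefix before and the suffix after the minimum. -/
def cartesian {α : Type*} [LinearOrder α] (l : List α) : BT :=
  cartesianAux l.length l

/-- `k` is the position of the minimum of `A` on the range `[i, j]`. -/
def isArgmin {α : Type*} [LinearOrder α] {n : ℕ} (A : Fin n → α) (i j k : Fin n) : Prop :=
  i ≤ k ∧ k ≤ j ∧ ∀ m, i ≤ m → m ≤ j → A k ≤ A m

/-- `k` is the position of the second smallest element of `A` on the range `[i, j]`. -/
def isSecondMin {α : Type*} [LinearOrder α] {n : ℕ} (A : Fin n → α) (i j k : Fin n) : Prop :=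
  i ≤ k ∧ k ≤ j ∧
    ∃ m, isArgmin A i j m ∧ k ≠ m ∧ ∀ l, i ≤ l → l ≤ j → l ≠ m → A k ≤ A l

/-- The node with inorder number `i` in `t` has a left child. -/
def hasLeftChildAt (t : BT) (i : ℕ) : Prop :=
  ∃ (p : List Bool) (ll lr r : BT),
    t.inList[i]? = some p ∧ t.subtree? p = some (.node (.node ll lr) r)

/-- Index of the `k`-th (0-indexed) occurrence of `b` in `w` (`w.length` if none). -/
def nthIdx (w : List Bool) (b : Bool) (k : ℕ) : ℕ :=
  ((List.range w.length).filter fun i => w.getD i (!b) = b).getD k w.length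

/-- `M` assigns to each two-child node of `t` a valid merge word of its inner spines:
a word of length `l_v + r_v` with exactly `r_v` occurrences of `true`. -/
def validMerge (t : BT) (M : List Bool → List Bool) : Prop :=
  ∀ p l r, t.subtree? p = some (.node l r) → l ≠ .leaf → r ≠ .leaf →
    (M p).length = l.Rspine + r.Lspine ∧ (M p).count true = r.Lspine

/-- The array `A` realizes the extended Cartesian tree `(t, M)`: its Cartesian tree is `t`
and, at every two-child node, the relative order of the values on the two inner spines
agrees with the merge word (which lists, in increasing value order, `false` for an element
of the left inner spine and `true` for one of the right inner spine). -/
def realizes {α : Type*} [LinearOrder α] {n : ℕ} (A : Fin n → α) (t : BT)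
    (M : List Bool → List Bool) : Prop :=
  cartesian (List.ofFn A) = t ∧
  ∀ p l r, t.subtree? p = some (.node l r) → l ≠ .leaf → r ≠ .leaf →
    ∀ (k k' : ℕ), k < l.Rspine → k' < r.Lspine →
      ∀ x y : Fin n,
        t.inList[(x : ℕ)]? = some (p ++ false :: List.replicate k true) →
        t.inList[(y : ℕ)]? = some (p ++ true :: List.replicate k' false) →
        (A x < A y ↔ nthIdx (M p) false k < nthIdx (M p) true k')

/-!
Let `p` be a node whose merge words `w = M p` and `w' = M' p` differ. At the first position
where they differ, one word lists the `k`-th node `x` of the left inner spine before the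
`k'`-th node `y` of the right inner spine and the other lists `y` first. On the inorder range
`[x, y]` the minimum sits at `p` and every other node descends from `x` or from `y`, so by heap
order the second minimum is the smaller of `x` and `y`: this is `x` for one array and `y` for
the other.
-/

lemma List.prefix_or_prefix_or_exists_diverge {α : Type*} [DecidableEq α] (w w' : List α) :
    w <+: w' ∨ w' <+: w ∨
      ∃ c a a' u u', a ≠ a' ∧ w = c ++ a :: u ∧ w' = c ++ a' :: u' := by
  induction w generalizing w' with
  | nil => exact Or.inl List.nil_prefix
  | cons a w ih =>
    cases w' with
    | nil => exact Or.inr (Or.inl List.nil_prefix)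
    | cons a' w' =>
      by_cases ha : a = a'
      · subst ha
        rcases ih w' with h | h | ⟨c, b, b', u, u', hb, rfl, rfl⟩
        · exact Or.inl (List.cons_prefix_cons.mpr ⟨rfl, h⟩)
        · exact Or.inr (Or.inl (List.cons_prefix_cons.mpr ⟨rfl, h⟩))
        · exact Or.inr (Or.inr ⟨a :: c, b, b', u, u', hb, rfl, rfl⟩)
      · exact Or.inr (Or.inr ⟨[], a, a', w, w', ha, rfl, rfl⟩)

lemma List.exists_fin_getElem?_eq_of_mem {β : Type*} {L : List β} {n : ℕ} {b : β}
    (hL : L.length = n) (h : b ∈ L) : ∃ x : Fin n, L[(x : ℕ)]? = some b := by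
  obtain ⟨i, hi⟩ := List.getElem?_of_mem h
  exact ⟨⟨i, hL ▸ (List.getElem?_eq_some_iff.mp hi).1⟩, hi⟩

namespace BT

lemma getElem?_inList_node {l r : BT} {i : ℕ} {p : List Bool}
    (h : (node l r).inList[i]? = some p) :
    (i < l.inList.length ∧ ∃ q, p = false :: q ∧ l.inList[i]? = some q) ∨
    (i = l.inList.length ∧ p = []) ∨
    (l.inList.length < i ∧ ∃ q, p = true :: q ∧
      r.inList[i - l.inList.length - 1]? = some q) := by
  rw [inList, List.getElem?_append] at h
  split at h
  · rename_i hlt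
    rw [List.getElem?_map] at h
    obtain ⟨q, hq, rfl⟩ := Option.map_eq_some_iff.mp h
    exact Or.inl ⟨by simpa using hlt, q, rfl, hq⟩
  · rename_i hge
    simp only [List.length_map, not_lt] at hge h
    obtain heq | hlt := Nat.eq_or_lt_of_le hge
    · subst heq
      simp only [Nat.sub_self, List.getElem?_cons_zero, Option.some_inj] at h
      exact Or.inr (Or.inl ⟨rfl, h.symm⟩)
    · rw [show i - l.inList.length = (i - l.inList.length - 1) + 1 by omega,
        List.getElem?_cons_succ, List.getElem?_map] at h
      obtain ⟨q, hq, rfl⟩ := Option.map_eq_some_iff.mp h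
      exact Or.inr (Or.inr ⟨hlt, q, rfl, hq⟩)

lemma nodup_inList (t : BT) : t.inList.Nodup := by
  induction t with
  | leaf => exact List.nodup_nil
  | node l r ihl ihr =>
    refine List.Nodup.append (ihl.map List.cons_injective)
      (List.nodup_cons.mpr ⟨by simp, ihr.map List.cons_injective⟩) ?_
    simp [List.disjoint_left]

lemma subtree?_append (t : BT) (a b : List Bool) :
    t.subtree? (a ++ b) = (t.subtree? a).bind fun s => s.subtree? b := by
  induction a generalizing t with
  | nil => simp [subtree?]
  | cons x a ih =>
    cases t with
    | leaf => rfl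
    | node l r => cases x <;> simp [subtree?, ih]

lemma mem_inList_iff {t : BT} {q : List Bool} :
    q ∈ t.inList ↔ ∃ a b, t.subtree? q = some (node a b) := by
  induction t generalizing q with
  | leaf => cases q <;> simp [inList, subtree?]
  | node l r ihl ihr =>
    cases q with
    | nil => simp [inList, subtree?]
    | cons x q => cases x <;> simp [inList, subtree?, ← ihl, ← ihr]

lemma subtree?_replicate_true {t : BT} {k : ℕ} (h : k < t.Rspine) :
    ∃ a b, t.subtree? (List.replicate k true) = some (node a b) := by
  induction k generalizing t with
  | zero => cases t with
    | leaf => simp [Rspine] at h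
    | node l r => exact ⟨l, r, rfl⟩
  | succ k ih => cases t with
    | leaf => simp [Rspine] at h
    | node l r => exact ih (t := r) (by simp [Rspine] at h; omega)

lemma subtree?_replicate_false {t : BT} {k : ℕ} (h : k < t.Lspine) :
    ∃ a b, t.subtree? (List.replicate k false) = some (node a b) := by
  induction k generalizing t with
  | zero => cases t with
    | leaf => simp [Lspine] at h
    | node l r => exact ⟨l, r, rfl⟩
  | succ k ih => cases t with
    | leaf => simp [Lspine] at h
    | node l r => exact ih (t := l) (by simp [Lspine] at h; omega)

lemma subtree?_left_inner_spine {t l r : BT} {p : List Bool} {k : ℕ}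
    (hsub : t.subtree? p = some (node l r)) (hk : k < l.Rspine) :
    ∃ a b, t.subtree? (p ++ false :: List.replicate k true) = some (node a b) := by
  obtain ⟨a, b, h⟩ := subtree?_replicate_true hk
  exact ⟨a, b, by simp [subtree?_append, hsub, subtree?, h]⟩

lemma subtree?_right_inner_spine {t l r : BT} {p : List Bool} {k : ℕ}
    (hsub : t.subtree? p = some (node l r)) (hk : k < r.Lspine) :
    ∃ a b, t.subtree? (p ++ true :: List.replicate k false) = some (node a b) := by
  obtain ⟨a, b, h⟩ := subtree?_replicate_false hk
  exact ⟨a, b, by simp [subtree?_append, hsub, subtree?, h]⟩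

lemma exists_subtree_offset (t : BT) (c : List Bool) :
    ∃ (s : BT) (δ : ℕ), ∀ u i, t.inList[i]? = some (c ++ u) →
      ∃ i', i = δ + i' ∧ s.inList[i']? = some u := by
  induction c generalizing t with
  | nil => exact ⟨t, 0, fun u i hi => ⟨i, by simp, hi⟩⟩
  | cons b c ih =>
    cases t with
    | leaf => exact ⟨leaf, 0, fun u i hi => by simp [inList] at hi⟩
    | node l r =>
      cases b
      · obtain ⟨s, δ, hs⟩ := ih l
        refine ⟨s, δ, fun u i hi => ?_⟩
        obtain ⟨-, q, hq, hi⟩ | ⟨-, h⟩ | ⟨-, q, hq, -⟩ := getElem?_inList_node hi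
        · obtain rfl : c ++ u = q := (List.cons.inj hq).2
          exact hs u i hi
        · simp at h
        · simp at hq
      · obtain ⟨s, δ, hs⟩ := ih r
        refine ⟨s, l.inList.length + 1 + δ, fun u i hi => ?_⟩
        obtain ⟨-, q, hq, -⟩ | ⟨-, h⟩ | ⟨hlt, q, hq, hi⟩ := getElem?_inList_node hi
        · simp at hq
        · simp at h
        · obtain rfl : c ++ u = q := (List.cons.inj hq).2
          obtain ⟨i', hi', hs'⟩ := hs u _ hi
          exact ⟨i', by omega, hs'⟩

lemma exists_subtree_offset_pair {t : BT} {c u v : List Bool} {x y : ℕ}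
    (hx : t.inList[x]? = some (c ++ u)) (hy : t.inList[y]? = some (c ++ v)) :
    ∃ (s : BT) (x' y' : ℕ), (x < y ↔ x' < y') ∧ (x ≤ y ↔ x' ≤ y') ∧
      s.inList[x']? = some u ∧ s.inList[y']? = some v := by
  obtain ⟨s, δ, hs⟩ := exists_subtree_offset t c
  obtain ⟨x', rfl, hx'⟩ := hs u x hx
  obtain ⟨y', rfl, hy'⟩ := hs v y hy
  exact ⟨s, x', y', by omega, by omega, hx', hy'⟩

lemma lt_of_getElem?_inList_left {t : BT} {c u : List Bool} {x y : ℕ}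
    (hx : t.inList[x]? = some (c ++ false :: u)) (hy : t.inList[y]? = some c) : x < y := by
  obtain ⟨s, x', y', hlt, -, hx', hy'⟩ :=
    exists_subtree_offset_pair (v := []) hx (by rwa [List.append_nil])
  cases s with
  | leaf => simp [inList] at hx'
  | node l r =>
    obtain ⟨hx'l, -⟩ | ⟨-, h⟩ | ⟨-, q, hq, -⟩ := getElem?_inList_node hx'
    · obtain ⟨-, q, hq, -⟩ | ⟨rfl, -⟩ | ⟨-, q, hq, -⟩ := getElem?_inList_node hy'
      · simp at hq
      · exact hlt.mpr hx'l
      · simp at hq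
    · simp at h
    · simp at hq

lemma lt_of_getElem?_inList_right {t : BT} {c v : List Bool} {x y : ℕ}
    (hx : t.inList[x]? = some c) (hy : t.inList[y]? = some (c ++ true :: v)) : x < y := by
  obtain ⟨s, x', y', hlt, -, hx', hy'⟩ :=
    exists_subtree_offset_pair (u := []) (by rwa [List.append_nil]) hy
  cases s with
  | leaf => simp [inList] at hx'
  | node l r =>
    obtain ⟨-, q, hq, -⟩ | ⟨-, h⟩ | ⟨hy'l, -⟩ := getElem?_inList_node hy'
    · simp at hq
    · simp at h
    · obtain ⟨-, q, hq, -⟩ | ⟨rfl, -⟩ | ⟨-, q, hq, -⟩ := getElem?_inList_node hx'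
      · simp at hq
      · exact hlt.mpr hy'l
      · simp at hq

lemma lt_of_getElem?_inList_left_right {t : BT} {c u v : List Bool} {x y : ℕ}
    (hx : t.inList[x]? = some (c ++ false :: u)) (hy : t.inList[y]? = some (c ++ true :: v)) :
    x < y := by
  obtain ⟨a, b, hab⟩ := mem_inList_iff.mp (List.mem_of_getElem? hx)
  obtain ⟨_ | ⟨l, r⟩, hc, hs⟩ := Option.bind_eq_some_iff.mp (subtree?_append t c _ ▸ hab)
  · simp [subtree?] at hs
  obtain ⟨m, hm⟩ := List.getElem?_of_mem (mem_inList_iff.mpr ⟨l, r, hc⟩)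
  exact (lt_of_getElem?_inList_left hx hm).trans (lt_of_getElem?_inList_right hm hy)

lemma replicate_true_prefix_of_le {k : ℕ} {t : BT} {x z : ℕ} {q : List Bool}
    (hx : t.inList[x]? = some (List.replicate k true)) (hz : t.inList[z]? = some q)
    (hxz : x ≤ z) : List.replicate k true <+: q := by
  induction k generalizing t x z q with
  | zero => exact List.nil_prefix
  | succ k ih =>
    cases t with
    | leaf => simp [inList] at hx
    | node l r =>
      obtain ⟨-, q', hq', -⟩ | ⟨-, h⟩ | ⟨hlx, q', hq', hx⟩ := getElem?_inList_node hx
      · simp [List.replicate_succ] at hq'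
      · simp at h
      obtain rfl : List.replicate k true = q' := (List.cons.inj hq').2
      obtain ⟨hzl, -⟩ | ⟨hzl, -⟩ | ⟨hzl, q', rfl, hz'⟩ := getElem?_inList_node hz
      · omega
      · omega
      exact List.cons_prefix_cons.mpr ⟨rfl, ih hx hz' (by omega)⟩

lemma replicate_false_prefix_of_le {k : ℕ} {t : BT} {x z : ℕ} {q : List Bool}
    (hx : t.inList[x]? = some (List.replicate k false)) (hz : t.inList[z]? = some q)
    (hzx : z ≤ x) : List.replicate k false <+: q := by
  induction k generalizing t x z q with
  | zero => exact List.nil_prefix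
  | succ k ih =>
    cases t with
    | leaf => simp [inList] at hx
    | node l r =>
      obtain ⟨hxl, q', hq', hx⟩ | ⟨-, h⟩ | ⟨-, q', hq', -⟩ := getElem?_inList_node hx
      · obtain rfl : List.replicate k false = q' := (List.cons.inj hq').2
        obtain ⟨-, q', rfl, hz'⟩ | ⟨hzl, -⟩ | ⟨hzl, -⟩ := getElem?_inList_node hz
        · exact List.cons_prefix_cons.mpr ⟨rfl, ih hx hz' hzx⟩
        · omega
        · omega
      · simp at h
      · simp [List.replicate_succ] at hq'

lemma eq_or_cons_append_of_between {t : BT} {p u v q : List Bool} {x y z : ℕ}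
    (hx : t.inList[x]? = some (p ++ false :: u)) (hy : t.inList[y]? = some (p ++ true :: v))
    (hz : t.inList[z]? = some q) (hxz : x ≤ z) (hzy : z ≤ y) :
    q = p ∨ (∃ s, q = p ++ false :: s) ∨ (∃ s, q = p ++ true :: s) := by
  obtain ⟨s, rfl⟩ | ⟨s, rfl⟩ | ⟨c, a, a', s, s', ha, rfl, rfl⟩ :=
    List.prefix_or_prefix_or_exists_diverge p q
  · rcases s with _ | ⟨_ | _, s⟩
    · exact Or.inl (List.append_nil p)
    · exact Or.inr (Or.inl ⟨s, rfl⟩)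
    · exact Or.inr (Or.inr ⟨s, rfl⟩)
  · rcases s with _ | ⟨_ | _, s⟩
    · exact Or.inl (List.append_nil q).symm
    · exfalso
      have := lt_of_getElem?_inList_left (u := s ++ true :: v) (by simpa using hy) hz
      omega
    · exfalso
      have := lt_of_getElem?_inList_right (v := s ++ false :: u) hz (by simpa using hx)
      omega
  · exfalso
    cases a <;> cases a' <;> simp only [ne_eq, not_true_eq_false] at ha
    · have := lt_of_getElem?_inList_left_right (u := s ++ true :: v) (by simpa using hy) hz
      omega
    · have := lt_of_getElem?_inList_left_right (v := s ++ false :: u) hz (by simpa using hx)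
      omega

lemma eq_or_inner_spine_prefix_of_between {t : BT} {p q : List Bool} {k k' x y z : ℕ}
    (hx : t.inList[x]? = some (p ++ false :: List.replicate k true))
    (hy : t.inList[y]? = some (p ++ true :: List.replicate k' false))
    (hz : t.inList[z]? = some q) (hxz : x ≤ z) (hzy : z ≤ y) :
    q = p ∨ p ++ false :: List.replicate k true <+: q ∨
      p ++ true :: List.replicate k' false <+: q := by
  obtain rfl | ⟨s, rfl⟩ | ⟨s, rfl⟩ := eq_or_cons_append_of_between hx hy hz hxz hzy
  · exact Or.inl rfl
  · obtain ⟨S, x', z', -, hle, hx', hz'⟩ :=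
      exists_subtree_offset_pair (c := p ++ [false]) (by simpa using hx) (by simpa using hz)
    have := replicate_true_prefix_of_le hx' hz' (hle.mp hxz)
    exact Or.inr (Or.inl (by simpa using this))
  · obtain ⟨S, z', y', -, hle, hz', hy'⟩ :=
      exists_subtree_offset_pair (c := p ++ [true]) (by simpa using hz) (by simpa using hy)
    have := replicate_false_prefix_of_le hy' hz' (hle.mp hzy)
    exact Or.inr (Or.inr (by simpa using this))

end BT

section Cartesian

variable {α : Type*} [LinearOrder α]

lemma minIdx_spec {l : List α} (h : l ≠ []) :
    ∃ a, l[minIdx l]? = some a ∧ ∀ b ∈ l, a ≤ b := by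
  rw [minIdx]
  cases ha : l.argmin id with
  | none => exact absurd (List.argmin_eq_none.mp ha) h
  | some a =>
    exact ⟨a, List.getElem?_idxOf (List.argmin_mem ha), fun b hb => List.le_of_mem_argmin hb ha⟩

lemma minIdx_lt_length {l : List α} (h : l ≠ []) : minIdx l < l.length := by
  obtain ⟨a, ha, -⟩ := minIdx_spec h
  exact (List.getElem?_eq_some_iff.mp ha).1

lemma cartesianAux_eq_of_length_le {f₁ f₂ : ℕ} {l : List α} (h₁ : l.length ≤ f₁)
    (h₂ : l.length ≤ f₂) : cartesianAux f₁ l = cartesianAux f₂ l := by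
  induction f₁ generalizing f₂ l with
  | zero =>
    obtain rfl : l = [] := List.length_eq_zero_iff.mp (by omega)
    cases f₂ <;> rfl
  | succ f₁ ih =>
    rcases l with _ | ⟨x, xs⟩
    · cases f₂ <;> rfl
    obtain ⟨f₂, rfl⟩ : ∃ f, f₂ = f + 1 := ⟨f₂ - 1, by simp at h₂; omega⟩
    have hm := minIdx_lt_length (List.cons_ne_nil x xs)
    simp only [List.length_cons] at h₁ h₂ hm
    simp only [cartesianAux]
    rw [ih (f₂ := f₂) (by simp; omega) (by simp; omega),
      ih (f₂ := f₂) (l := (x :: xs).drop _) (by simp; omega) (by simp; omega)]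

lemma cartesian_of_ne_nil {l : List α} (h : l ≠ []) :
    cartesian l = .node (cartesian (l.take (minIdx l))) (cartesian (l.drop (minIdx l + 1))) := by
  have hm := minIdx_lt_length h
  obtain ⟨x, xs, rfl⟩ := List.exists_cons_of_ne_nil h
  rw [cartesian, List.length_cons, cartesianAux, cartesian, cartesian,
    cartesianAux_eq_of_length_le (f₂ := (List.take _ _).length) (by simp at hm ⊢; omega) le_rfl,
    cartesianAux_eq_of_length_le (f₂ := (List.drop _ _).length) (by simp) le_rfl]

lemma length_inList_cartesian (l : List α) : (cartesian l).inList.length = l.length := by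
  rcases eq_or_ne l [] with rfl | h
  · rfl
  have hm := minIdx_lt_length h
  rw [cartesian_of_ne_nil h, BT.inList]
  simp only [List.length_append, List.length_map, List.length_cons,
    length_inList_cartesian (l.take (minIdx l)), length_inList_cartesian (l.drop (minIdx l + 1)),
    List.length_take, List.length_drop]
  omega
termination_by l.length
decreasing_by all_goals simp only [List.length_take, List.length_drop]; omega

lemma length_inList_cartesian_ofFn {n : ℕ} (A : Fin n → α) :
    (cartesian (List.ofFn A)).inList.length = n := by
  rw [length_inList_cartesian, List.length_ofFn]

lemma cartesian_le_of_prefix (l : List α) {i j : ℕ} {pi pj : List Bool}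
    (hi : (cartesian l).inList[i]? = some pi) (hj : (cartesian l).inList[j]? = some pj)
    (hpre : pi <+: pj) : ∃ a b, l[i]? = some a ∧ l[j]? = some b ∧ a ≤ b := by
  rcases eq_or_ne l [] with rfl | h
  · simp [cartesian, cartesianAux, BT.inList] at hi
  have hm := minIdx_lt_length h
  have hlen := length_inList_cartesian (l.take (minIdx l))
  rw [List.length_take, min_eq_left hm.le] at hlen
  rw [cartesian_of_ne_nil h] at hi hj
  obtain ⟨tl, rfl⟩ := hpre
  obtain ⟨hil, qi, rfl, hi'⟩ | ⟨rfl, rfl⟩ | ⟨hir, qi, rfl, hi'⟩ :=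
    BT.getElem?_inList_node hi
  · obtain ⟨-, qj, hqj, hj'⟩ | ⟨-, h0⟩ | ⟨-, qj, hqj, -⟩ := BT.getElem?_inList_node hj
    · obtain rfl : qi ++ tl = qj := (List.cons.inj hqj).2
      obtain ⟨a, b, ha, hb, hab⟩ := cartesian_le_of_prefix _ hi' hj' ⟨tl, rfl⟩
      have hjl := (List.getElem?_eq_some_iff.mp hb).1
      simp only [List.getElem?_take, List.length_take] at ha hb hjl
      rw [if_pos (by omega)] at ha hb
      exact ⟨a, b, ha, hb, hab⟩
    · simp at h0
    · simp at hqj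
  · obtain ⟨amin, hamin, hmin⟩ := minIdx_spec h
    have hj' : j < l.length := by
      rw [← length_inList_cartesian l, cartesian_of_ne_nil h]
      exact (List.getElem?_eq_some_iff.mp hj).1
    rw [hlen]
    exact ⟨amin, l[j], hamin, List.getElem?_eq_getElem hj', hmin _ (l.getElem_mem hj')⟩
  · obtain ⟨-, qj, hqj, -⟩ | ⟨-, h0⟩ | ⟨hjr, qj, hqj, hj'⟩ :=
      BT.getElem?_inList_node hj
    · simp at hqj
    · simp at h0
    · obtain rfl : qi ++ tl = qj := (List.cons.inj hqj).2
      obtain ⟨a, b, ha, hb, hab⟩ := cartesian_le_of_prefix _ hi' hj' ⟨tl, rfl⟩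
      rw [List.getElem?_drop, hlen] at ha hb
      rw [hlen] at hir hjr
      rw [show minIdx l + 1 + (i - minIdx l - 1) = i by omega] at ha
      rw [show minIdx l + 1 + (j - minIdx l - 1) = j by omega] at hb
      exact ⟨a, b, ha, hb, hab⟩
termination_by l.length
decreasing_by all_goals simp only [List.length_take, List.length_drop]; omega

lemma cartesian_ofFn_le {n : ℕ} {A : Fin n → α} {i j : Fin n} {pi pj : List Bool}
    (hi : (cartesian (List.ofFn A)).inList[(i : ℕ)]? = some pi)
    (hj : (cartesian (List.ofFn A)).inList[(j : ℕ)]? = some pj) (hpre : pi <+: pj) :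
    A i ≤ A j := by
  obtain ⟨a, b, ha, hb, hab⟩ := cartesian_le_of_prefix _ hi hj hpre
  simp only [List.getElem?_ofFn, Fin.is_lt, dite_true, Option.some_inj] at ha hb
  exact ha ▸ hb ▸ hab

end Cartesian

def boolPositions (w : List Bool) (b : Bool) : List ℕ :=
  (List.range w.length).filter fun i => w.getD i (!b) = b

lemma nthIdx_eq_getD_boolPositions (w : List Bool) (b : Bool) (k : ℕ) :
    nthIdx w b k = (boolPositions w b).getD k w.length := rfl

lemma boolPositions_append (c d : List Bool) (b : Bool) :
    boolPositions (c ++ d) b = boolPositions c b ++ (boolPositions d b).map (c.length + ·) := by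
  rw [boolPositions, List.length_append, List.range_add, List.filter_append, List.filter_map]
  congr 1
  · exact List.filter_congr fun i hi => by
      rw [List.getD_append _ _ _ _ (List.mem_range.mp hi)]
  · congr 1
    exact List.filter_congr fun i _ => by
      rw [Function.comp_apply, List.getD_append_right _ _ _ _ (by omega),
        Nat.add_sub_cancel_left]

lemma boolPositions_singleton (a b : Bool) :
    boolPositions [a] b = if a = b then [0] else [] := by
  by_cases h : a = b <;> simp [boolPositions, h]

lemma length_boolPositions (c : List Bool) (b : Bool) :
    (boolPositions c b).length = c.count b := by
  induction c with
  | nil => rfl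
  | cons a c ih =>
    rw [List.count_cons, ← List.singleton_append, boolPositions_append,
      boolPositions_singleton]
    by_cases h : a = b <;> simp [h, ih]

lemma nthIdx_append_cons_self (c u : List Bool) (b : Bool) :
    nthIdx (c ++ b :: u) b (c.count b) = c.length := by
  rw [nthIdx_eq_getD_boolPositions, ← List.singleton_append, boolPositions_append,
    boolPositions_append, boolPositions_singleton, if_pos rfl,
    List.getD_append_right _ _ _ _ (length_boolPositions c b).le, length_boolPositions,
    Nat.sub_self]
  simp

lemma lt_nthIdx_append_cons_not (c u : List Bool) (b : Bool) :
    c.length < nthIdx (c ++ b :: u) (!b) (c.count (!b)) := by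
  rw [nthIdx_eq_getD_boolPositions, ← List.singleton_append, boolPositions_append,
    boolPositions_append, boolPositions_singleton, if_neg (by simp),
    List.getD_append_right _ _ _ _ (length_boolPositions c _).le, length_boolPositions,
    Nat.sub_self]
  cases boolPositions u (!b) <;> simp

/-- The pair is read off at the first position where the two words differ. -/
lemma exists_nthIdx_lt_iff_not {w w' : List Bool} (hl : w.length = w'.length)
    (hc : w.count true = w'.count true) (hne : w ≠ w') :
    ∃ k k', k < w.count false ∧ k' < w.count true ∧
      (nthIdx w false k < nthIdx w true k' ↔ ¬ nthIdx w' false k < nthIdx w' true k') := by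
  have hcf : w.count false = w'.count false := by
    have := List.count_false_add_count_true w
    have := List.count_false_add_count_true w'
    omega
  obtain h | h | ⟨c, a, a', u, u', ha, rfl, rfl⟩ := List.prefix_or_prefix_or_exists_diverge w w'
  · exact absurd (h.eq_of_length hl) hne
  · exact absurd (h.eq_of_length hl.symm).symm hne
  obtain rfl : a' = !a := by cases a <;> cases a' <;> simp_all
  refine ⟨c.count false, c.count true, ?_, ?_, ?_⟩
  · cases a
    · simp [List.count_append]
    · rw [hcf]; simp [List.count_append]
  · cases a
    · rw [hc]; simp [List.count_append]
    · simp [List.count_append]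
  · cases a
    · have h₁ := nthIdx_append_cons_self c u false
      have h₂ := lt_nthIdx_append_cons_not c u false
      have h₃ := nthIdx_append_cons_self c u' true
      have h₄ := lt_nthIdx_append_cons_not c u' true
      simp only [Bool.not_false, Bool.not_true] at *
      exact iff_of_true (by omega) (by omega)
    · have h₁ := nthIdx_append_cons_self c u true
      have h₂ := lt_nthIdx_append_cons_not c u true
      have h₃ := nthIdx_append_cons_self c u' false
      have h₄ := lt_nthIdx_append_cons_not c u' false
      simp only [Bool.not_false, Bool.not_true] at *
      exact iff_of_false (by omega) (by omega)

/-- Every entry of the range other than the LCA `m` lies below one of the two endpoints. -/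
lemma isSecondMin_of_inner_spines {α : Type*} [LinearOrder α] {n : ℕ} {A : Fin n → α}
    {t : BT} (ht : cartesian (List.ofFn A) = t) {p : List Bool} {k k' : ℕ} {x y m : Fin n}
    (hx : t.inList[(x : ℕ)]? = some (p ++ false :: List.replicate k true))
    (hy : t.inList[(y : ℕ)]? = some (p ++ true :: List.replicate k' false))
    (hm : t.inList[(m : ℕ)]? = some p) :
    x < y ∧ isSecondMin A x y (if A x < A y then x else y) := by
  subst ht
  have hxm : x < m := BT.lt_of_getElem?_inList_left hx hm
  have hmy : m < y := BT.lt_of_getElem?_inList_right hm hy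
  have hbetween :
      ∀ z, x ≤ z → z ≤ y → A m ≤ A z ∧ (z ≠ m → min (A x) (A y) ≤ A z) := by
    intro z hxz hzy
    have hzlt : (z : ℕ) < (cartesian (List.ofFn A)).inList.length := by
      rw [length_inList_cartesian_ofFn]; exact z.is_lt
    have hz := List.getElem?_eq_getElem hzlt
    rcases BT.eq_or_inner_spine_prefix_of_between hx hy hz hxz hzy with hq | hq | hq
    · have hzm : z = m := Fin.ext <|
        (List.getElem?_inj hzlt (BT.nodup_inList _)).mp (hz.trans (hq ▸ hm.symm))
      exact ⟨hzm ▸ le_rfl, fun h => absurd hzm h⟩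
    · exact ⟨cartesian_ofFn_le hm hz ((List.prefix_append _ _).trans hq),
        fun _ => (min_le_left _ _).trans (cartesian_ofFn_le hx hz hq)⟩
    · exact ⟨cartesian_ofFn_le hm hz ((List.prefix_append _ _).trans hq),
        fun _ => (min_le_right _ _).trans (cartesian_ofFn_le hy hz hq)⟩
  have hargmin : isArgmin A x y m := ⟨hxm.le, hmy.le, fun z hxz hzy => (hbetween z hxz hzy).1⟩
  refine ⟨hxm.trans hmy, ?_⟩
  split_ifs with hxy
  · refine ⟨le_rfl, (hxm.trans hmy).le, m, hargmin, hxm.ne, fun z hxz hzy hzm => ?_⟩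
    simpa [min_eq_left hxy.le] using (hbetween z hxz hzy).2 hzm
  · refine ⟨(hxm.trans hmy).le, le_rfl, m, hargmin, hmy.ne', fun z hxz hzy hzm => ?_⟩
    simpa [min_eq_right (not_lt.mp hxy)] using (hbetween z hxz hzy).2 hzm

theorem stmt15_general {α : Type*} [LinearOrder α] {n : ℕ} (A A' : Fin n → α)
    (t : BT) (M M' : List Bool → List Bool)
    (hM : validMerge t M) (hM' : validMerge t M')
    (hR : realizes A t M) (hR' : realizes A' t M')
    (hdiff : ∃ p l r, t.subtree? p = some (.node l r) ∧
        l ≠ .leaf ∧ r ≠ .leaf ∧ M p ≠ M' p) :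
    ∃ i j k k' : Fin n, i < j ∧
      isSecondMin A i j k ∧ isSecondMin A' i j k' ∧ k ≠ k' := by
  obtain ⟨p, l, r, hsub, hl, hr, hne⟩ := hdiff
  obtain ⟨hlen, hcount⟩ := hM p l r hsub hl hr
  obtain ⟨hlen', hcount'⟩ := hM' p l r hsub hl hr
  obtain ⟨k, k', hk, hk', hord⟩ :=
    exists_nthIdx_lt_iff_not (hlen.trans hlen'.symm) (hcount.trans hcount'.symm) hne
  have hkl : k < l.Rspine := by have := List.count_false_add_count_true (M p); omega
  have hk'r : k' < r.Lspine := hcount ▸ hk'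
  have hnode : ∀ q, (∃ a b, t.subtree? q = some (.node a b)) →
      ∃ x : Fin n, t.inList[(x : ℕ)]? = some q := fun q hq =>
    List.exists_fin_getElem?_eq_of_mem (hR.1 ▸ length_inList_cartesian_ofFn A)
      (BT.mem_inList_iff.mpr hq)
  obtain ⟨x, hx⟩ := hnode _ (BT.subtree?_left_inner_spine hsub hkl)
  obtain ⟨y, hy⟩ := hnode _ (BT.subtree?_right_inner_spine hsub hk'r)
  obtain ⟨m, hm⟩ := hnode p ⟨l, r, hsub⟩
  obtain ⟨hxy, hsec⟩ := isSecondMin_of_inner_spines hR.1 hx hy hm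
  obtain ⟨-, hsec'⟩ := isSecondMin_of_inner_spines hR'.1 hx hy hm
  have horder : A x < A y ↔ ¬ A' x < A' y :=
    (hR.2 p l r hsub hl hr k k' hkl hk'r x y hx hy).trans
      (hord.trans (not_congr (hR'.2 p l r hsub hl hr k k' hkl hk'r x y hx hy).symm))
  refine ⟨x, y, _, _, hxy, hsec, hsec', ?_⟩
  by_cases h : A x < A y
  · rw [if_pos h, if_neg (horder.mp h)]
    exact hxy.ne
  · rw [if_neg h, if_pos (not_not.mp (mt horder.mpr h))]
    exact hxy.ne'

/-- Distinct extended Cartesian trees are distinguished by some range top-2 query: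
if two arrays realize extended Cartesian trees with the same topology `t` but with
different merge orders at some node, then some second-minimum answer differs. -/
theorem stmt15 {α : Type*} [LinearOrder α] {n : ℕ} (A A' : Fin n → α)
    (hA : Function.Injective A) (hA' : Function.Injective A')
    (t : BT) (M M' : List Bool → List Bool)
    (hM : validMerge t M) (hM' : validMerge t M')
    (hR : realizes A t M) (hR' : realizes A' t M')
    (hdiff : ∃ p l r, t.subtree? p = some (.node l r) ∧
        l ≠ .leaf ∧ r ≠ .leaf ∧ M p ≠ M' p) :
    ∃ i j k k' : Fin n, i < j ∧
      isSecondMin A i j k ∧ isSecondMin A' i j k' ∧ k ≠ k' :=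
  stmt15_general A A' t M M' hM hM' hR hR' hdiff
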